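/- For every integer n ≥ 1 the following identity holds in the polynomial ring ℚ[x]: the determinant of the n×n matrix with entries binom(x+i+j, i-j+1) for 0 ≤ j ≤ i+1 and 0 for j > i+1, 0 ≤ i, j ≤ n-1, equals (x/n!)·∏_{j=n+1}^{2n-1} (x+j). -/

import Mathlib

/-!
The matrix is lower Hessenberg with ones on the superdiagonal, so expanding along the last row
gives `D (n + 1) = ∑ j ≤ n, (-1) ^ (n + j) a n j D j` for its leading principal minors `D`.
Inserting the closed form of `D j`, the `j`-th term becomes
`(-1) ^ (n + j) binom(n + 1, j) / (n + 1)! · x (x + j + 1) ⋯ (x + j + n)`, and the recursion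
reduces to the vanishing of the `(n + 1)`-st forward difference of the degree `n` polynomial
`y ↦ (y + 1) ⋯ (y + n)`.
-/

open Polynomial

/-- The polynomial binomial coefficient `binom(y, r) = (1/r!)·∏_{ℓ=0}^{r-1} (y - ℓ)`. -/
noncomputable def polyChoose (y : Polynomial ℚ) (r : ℕ) : Polynomial ℚ :=
  Polynomial.C ((r.factorial : ℚ)⁻¹) * ∏ ℓ ∈ Finset.range r, (y - Polynomial.C (ℓ : ℚ))

open Finset
open scoped Nat

section Hessenberg

variable {R : Type*}

def leadingMatrix (a : ℕ → ℕ → R) (n : ℕ) : Matrix (Fin n) (Fin n) R :=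
  Matrix.of fun i j => a i j

variable [CommRing R] {a : ℕ → ℕ → R}

theorem det_removeColumn_eq_det_leadingMatrix (hsuper : ∀ i, a i (i + 1) = 1)
    (hzero : ∀ i j, i + 1 < j → a i j = 0) {j n : ℕ} (hjn : j ≤ n) :
    (Matrix.of fun i k : Fin n => a i (if (k : ℕ) < j then k else k + 1)).det =
      (leadingMatrix a j).det := by
  induction n with
  | zero =>
    obtain rfl : j = 0 := by omega
    simp
  | succ m ih =>
    rcases hjn.eq_or_lt with rfl | hjm
    · congr 1
      ext i k
      simp [leadingMatrix, Fin.is_le k]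
    have hlast : ¬ m < j := by omega
    -- the last column is `a i (m + 1)`, whose only nonzero entry is `a m (m + 1) = 1`
    rw [Matrix.det_succ_column _ (Fin.last m), Fintype.sum_eq_single (Fin.last m)]
    · simp only [Matrix.of_apply, Fin.val_last, if_neg hlast, hsuper, mul_one]
      rw [Even.neg_one_pow ⟨m, rfl⟩, one_mul, ← ih (by omega)]
      congr 1
      ext i k
      simp [Fin.succAbove_last]
    · intro i hi
      have him : (i : ℕ) + 1 < m + 1 := by
        have := Fin.val_lt_last hi
        omega
      simp [hlast, hzero _ _ him]

theorem det_leadingMatrix_succ (hsuper : ∀ i, a i (i + 1) = 1)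
    (hzero : ∀ i j, i + 1 < j → a i j = 0) (n : ℕ) :
    (leadingMatrix a (n + 1)).det =
      ∑ j ∈ range (n + 1), (-1) ^ (n + j) * a n j * (leadingMatrix a j).det := by
  rw [Matrix.det_succ_row _ (Fin.last n),
    ← Fin.sum_univ_eq_sum_range (fun j => (-1) ^ (n + j) * a n j * (leadingMatrix a j).det)]
  refine Fintype.sum_congr _ _ fun j => ?_
  rw [← det_removeColumn_eq_det_leadingMatrix hsuper hzero (Nat.lt_succ_iff.mp j.isLt)]
  congr 2
  ext i k
  simp only [leadingMatrix, Matrix.submatrix_apply, Matrix.of_apply, Fin.succAbove_last,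
    Fin.val_castSucc, Fin.succAbove, Fin.lt_def, apply_ite Fin.val, Fin.val_succ]

end Hessenberg

theorem neg_one_pow_sub_eq_neg_one_pow_add {R : Type*} [Monoid R] [HasDistribNeg R] {k N : ℕ}
    (h : k ≤ N) : (-1 : R) ^ (N - k) = (-1) ^ (N + k) := by
  rw [show N + k = N - k + 2 * k by omega, pow_add, pow_mul, neg_one_sq, one_pow, mul_one]

theorem sum_range_alternating_choose_mul_prod_add_eq_zero {R ι : Type*} [CommRing R]
    (s : Finset ι) (c : ι → R) {N : ℕ} (hs : #s < N) (y : R) :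
    ∑ k ∈ range (N + 1), (-1 : R) ^ (N + k) * N.choose k * ∏ i ∈ s, (y + k + c i) = 0 := by
  set P : R[X] := ∏ i ∈ s, (X + C (c i))
  have hP : P.natDegree ≤ #s := by
    refine (natDegree_prod_le _ _).trans
      ((sum_le_card_nsmul s _ 1 fun i _ => ?_).trans_eq (by simp))
    exact natDegree_add_C.trans_le natDegree_X_le
  have := congrFun (fwdDiff_iter_eq_zero_of_degree_lt (hP.trans_lt hs)) y
  rw [fwdDiff_iter_eq_sum_shift, Pi.zero_apply] at this
  rw [← this]
  refine sum_congr rfl fun k hk => ?_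
  rw [← neg_one_pow_sub_eq_neg_one_pow_add (Nat.lt_succ_iff.mp (mem_range.mp hk))]
  simp [P, eval_prod, zsmul_eq_mul, add_assoc]

noncomputable def risingProd (a b : ℕ) : ℚ[X] :=
  ∏ l ∈ Ico a b, (X + C (l : ℚ))

theorem risingProd_mul_risingProd {a b c : ℕ} (hab : a ≤ b) (hbc : b ≤ c) :
    risingProd a b * risingProd b c = risingProd a c :=
  prod_Ico_consecutive _ hab hbc

theorem risingProd_zero (b : ℕ) : risingProd 0 (b + 1) = X * risingProd 1 (b + 1) := by
  rw [risingProd, prod_eq_prod_Ico_succ_bot (Nat.succ_pos b), risingProd]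
  simp

theorem polyChoose_X_add_C {c r : ℕ} (h : r ≤ c + 1) :
    polyChoose (X + C (c : ℚ)) r = C ((r ! : ℚ)⁻¹) * risingProd (c + 1 - r) (c + 1) := by
  have reflect := prod_Ico_reflect (fun l : ℕ => X + C (l : ℚ)) 0 h
  rw [Nat.sub_zero] at reflect
  rw [polyChoose, risingProd, ← reflect, Nat.Ico_zero_eq_range]
  congr 1
  refine prod_congr rfl fun l hl => ?_
  rw [Nat.cast_sub (by rw [mem_range] at hl; omega), map_sub, add_sub_assoc]

noncomputable def binomEntry (i j : ℕ) : ℚ[X] :=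
  if j ≤ i + 1 then polyChoose (X + C ((i + j : ℕ) : ℚ)) (i + 1 - j) else 0

theorem binomEntry_succ_self (i : ℕ) : binomEntry i (i + 1) = 1 := by
  simp [binomEntry, polyChoose]

theorem binomEntry_of_lt {i j : ℕ} (h : i + 1 < j) : binomEntry i j = 0 :=
  if_neg h.not_ge

theorem binomEntry_of_le {i j : ℕ} (h : j ≤ i + 1) :
    binomEntry i j = C (((i + 1 - j)! : ℚ)⁻¹) * risingProd (2 * j) (i + j + 1) := by
  rw [binomEntry, if_pos h, polyChoose_X_add_C (by omega)]
  congr 2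
  omega

noncomputable def detFormula (n : ℕ) : ℚ[X] :=
  if n = 0 then 1 else X * C ((n ! : ℚ)⁻¹) * risingProd (n + 1) (2 * n)

theorem binomEntry_mul_detFormula {n j : ℕ} (hj : j ≤ n) :
    binomEntry n j * detFormula j =
      C (((n + 1).choose j : ℚ) / (n + 1)!) * (X * risingProd (j + 1) (n + j + 1)) := by
  have hscalar : ((n + 1 - j)! : ℚ)⁻¹ * (j ! : ℚ)⁻¹ = (n + 1).choose j / (n + 1)! := by
    rw [Nat.cast_choose ℚ (by omega : j ≤ n + 1)]
    field_simp
  rw [binomEntry_of_le (by omega), ← hscalar, C_mul]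
  rcases Nat.eq_zero_or_pos j with rfl | hj0
  · simp [detFormula, risingProd_zero]
  · rw [detFormula, if_neg hj0.ne', ← risingProd_mul_risingProd (a := j + 1) (b := 2 * j)
      (c := n + j + 1) (by omega) (by omega)]
    ring

theorem sum_binomEntry_mul_detFormula (n : ℕ) :
    ∑ j ∈ range (n + 1), (-1) ^ (n + j) * binomEntry n j * detFormula j =
      detFormula (n + 1) := by
  have hshift (k : ℕ) :
      ∏ l ∈ Ico 1 (n + 1), (X + (k : ℚ[X]) + C (l : ℚ)) = risingProd (k + 1) (n + k + 1) := by
    rw [risingProd, add_comm k 1, add_right_comm n k 1, ← prod_Ico_add']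
    refine prod_congr rfl fun l _ => ?_
    simp only [Nat.cast_add, C_add, map_natCast]
    ring
  have vanish := sum_range_alternating_choose_mul_prod_add_eq_zero (Ico 1 (n + 1))
    (fun l => C (l : ℚ)) (N := n + 1) (by simp) X
  simp only [hshift, sum_range_succ _ (n + 1), Nat.choose_self] at vanish
  calc ∑ j ∈ range (n + 1), (-1) ^ (n + j) * binomEntry n j * detFormula j
      = -(C ((n + 1)! : ℚ)⁻¹ * X * ∑ j ∈ range (n + 1),
          (-1) ^ (n + 1 + j) * ((n + 1).choose j : ℚ[X]) * risingProd (j + 1) (n + j + 1)) := by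
        rw [mul_sum, ← sum_neg_distrib]
        refine sum_congr rfl fun j hj => ?_
        rw [mul_assoc, binomEntry_mul_detFormula (Nat.lt_succ_iff.mp (mem_range.mp hj))]
        simp only [div_eq_mul_inv, C_mul, map_natCast]
        ring
    _ = C ((n + 1)! : ℚ)⁻¹ * X * risingProd (n + 2) (2 * (n + 1)) := by
        rw [eq_neg_of_add_eq_zero_left vanish, ← two_mul, pow_mul, neg_one_sq, one_pow,
          show n + (n + 1) + 1 = 2 * (n + 1) by ring]
        simp
    _ = detFormula (n + 1) := by
        simp [detFormula]

theorem det_leadingMatrix_binomEntry (n : ℕ) : (leadingMatrix binomEntry n).det = detFormula n := by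
  induction n using Nat.strong_induction_on with
  | _ n ih =>
    cases n with
    | zero => simp [detFormula]
    | succ n =>
      rw [det_leadingMatrix_succ binomEntry_succ_self (fun _ _ => binomEntry_of_lt),
        ← sum_binomEntry_mul_detFormula]
      refine sum_congr rfl fun j hj => ?_
      rw [ih j (mem_range.mp hj)]

theorem stmt_7 (n : ℕ) (hn : 1 ≤ n) :
    Matrix.det (Matrix.of fun i j : Fin n =>
        if (j : ℕ) ≤ (i : ℕ) + 1 then
          polyChoose (Polynomial.X + Polynomial.C (((i : ℕ) + (j : ℕ) : ℕ) : ℚ))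
            ((i : ℕ) + 1 - (j : ℕ))
        else 0)
      = Polynomial.X * Polynomial.C ((n.factorial : ℚ)⁻¹) *
          ∏ j ∈ Finset.Icc (n + 1) (2 * n - 1), (Polynomial.X + Polynomial.C (j : ℚ)) := by
  have hdet := det_leadingMatrix_binomEntry n
  rw [detFormula, if_neg (by omega), risingProd, show 2 * n = 2 * n - 1 + 1 by omega,
    Ico_add_one_right_eq_Icc] at hdet
  exact hdet
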